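/- arXiv:2604.18163 — 3 statements merged into one kernel-verified Lean document; each statement's English description precedes it below -/
import Mathlib

section
/- Let G be a finite commutative group of cardinality q, and let h ∈ G be a generator (orderOf h = q and the subgroup generated by h is all of G). Then for any two elements c₀, c₁ ∈ G, the pushforward of the uniform distribution on ZMod q under r ↦ c₀ · h^{r.val} is equal to the pushforward of the uniform distribution on ZMod q under r ↦ c₁ · h^{r.val}. Consequently, the distribution of the tallier's re-randomized commitment published on the bulletin board is identical regardless of which commitment the voter submitted, and a coercer who learns the voter's submitted commitment and randomness cannot distinguish a real receipt from a fake one (information-theoretic receipt-freeness given one honest tallier). -/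
open PMF

lemma aux_uniform {G : Type*} [CommGroup G] [Fintype G]
    (q : ℕ) [NeZero q] (hcard : Nat.card G = q)
    (h : G) (hord : orderOf h = q) (hgen : Subgroup.zpowers h = ⊤)
    (c : G) :
    (PMF.uniformOfFintype (ZMod q)).map (fun r => c * h ^ r.val) =
      PMF.uniformOfFintype G := by
  have hbij : Function.Bijective (fun r : ZMod q => c * h ^ r.val) := by
    rw [Fintype.bijective_iff_injective_and_card]
    refine ⟨fun r s hrs => ?_, by simp [ZMod.card, ← hcard, Nat.card_eq_fintype_card]⟩
    simp only [mul_right_cancel_iff, mul_left_cancel_iff] at hrs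
    have := pow_injOn_Iio_orderOf (x := h)
      (by simpa [hord] using ZMod.val_lt r) (by simpa [hord] using ZMod.val_lt s) hrs
    exact ZMod.val_injective q this
  ext g
  obtain ⟨r, hr⟩ := hbij.2 g
  rw [PMF.map_apply, tsum_eq_single r, if_pos hr.symm]
  · simp [uniformOfFintype_apply, ZMod.card, ← hcard, Nat.card_eq_fintype_card]
  · intro s hs
    rw [if_neg]
    intro hgs
    exact hs (hbij.1 (hgs.symm.trans hr.symm))

/-- Information-theoretic receipt-freeness (core indistinguishability): if `h`
generates the finite commutative group `G` of cardinality `q`, then for any two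
submitted commitments `c₀, c₁`, the distributions of the re-randomized
commitments `c₀ · h^r̃` and `c₁ · h^r̃` (for uniformly random blinding exponent
`r̃ ∈ ZMod q`) are identical, so a coercer cannot distinguish a real receipt
from a fake one. -/
theorem receipt_freeness_indistinguishable {G : Type*} [CommGroup G] [Fintype G]
    (q : ℕ) [NeZero q] (hcard : Nat.card G = q)
    (h : G) (hord : orderOf h = q) (hgen : Subgroup.zpowers h = ⊤)
    (c₀ c₁ : G) :
    (PMF.uniformOfFintype (ZMod q)).map (fun r => c₀ * h ^ r.val) =
      (PMF.uniformOfFintype (ZMod q)).map (fun r => c₁ * h ^ r.val) := by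
  rw [aux_uniform q hcard h hord hgen c₀, aux_uniform q hcard h hord hgen c₁]
end

section
/- Let G be a finite commutative group of cardinality q with h ∈ G a generator (orderOf h = q, Subgroup.zpowers h = ⊤), let g : Fin n → G, and define CommVec(v; r) = h^{r.val} · ∏_k g_k^{v(k)} for v : Fin n → ℤ and r ∈ ZMod q. Then for any two vote vectors v₀, v₁ : Fin n → ℤ, the pushforward of the uniform distribution on ZMod q under r ↦ CommVec(v₀; r) equals the pushforward of the uniform distribution on ZMod q under r ↦ CommVec(v₁; r); both are the uniform distribution on G. That is, the Pedersen vector commitment is perfectly hiding: the distribution of the commitment under uniformly chosen randomness is independent of the committed vector. -/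
open PMF

/-- Pedersen vector commitment with randomness in `ZMod q`:
`CommVec(v; r) = h^{r.val} · ∏ k, g k ^ v k`. -/
def CommVecZ {G : Type*} [CommGroup G] {n : ℕ} {q : ℕ} (h : G) (g : Fin n → G)
    (v : Fin n → ℤ) (r : ZMod q) : G :=
  h ^ r.val * ∏ k, g k ^ v k

lemma commVec_aux_bij {G : Type*} [CommGroup G] [Fintype G]
    (q : ℕ) [NeZero q]
    (h : G) (hord : orderOf h = q) (hgen : Subgroup.zpowers h = ⊤) (c : G) :
    Function.Bijective (fun r : ZMod q => h ^ r.val * c) := by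
  constructor
  · intro r s hrs
    simp only [mul_left_cancel_iff] at hrs
    have := pow_eq_pow_iff_modEq.mp (mul_right_cancel hrs)
    rw [hord] at this
    have : r.val = s.val := Nat.ModEq.eq_of_lt_of_lt this (ZMod.val_lt r) (ZMod.val_lt s)
    exact ZMod.val_injective q this
  · intro a
    have : a * c⁻¹ ∈ Subgroup.zpowers h := hgen ▸ Subgroup.mem_top _
    obtain ⟨m, hm⟩ := mem_powers_iff_mem_zpowers.mpr this
    refine ⟨(m : ZMod q), ?_⟩
    show h ^ (ZMod.val (m : ZMod q)) * c = a
    rw [ZMod.val_natCast, ← hord, pow_mod_orderOf, show h ^ m = a * c⁻¹ from hm,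
      inv_mul_cancel_right]

lemma commVec_aux_map {G : Type*} [CommGroup G] [Fintype G]
    (q : ℕ) [NeZero q] (hcard : Nat.card G = q)
    (h : G) (hord : orderOf h = q) (hgen : Subgroup.zpowers h = ⊤) (c : G) :
    (PMF.uniformOfFintype (ZMod q)).map (fun r => h ^ r.val * c) =
      PMF.uniformOfFintype G := by
  have hb := commVec_aux_bij q h hord hgen c
  have : Nonempty G := ⟨c⟩
  ext a
  obtain ⟨r, hr⟩ := hb.2 a
  rw [PMF.map_apply, PMF.uniformOfFintype_apply,
    tsum_eq_single r (by
      intro s hs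
      rw [if_neg]
      intro e
      exact hs (hb.1 ((e.symm.trans hr.symm : _ = (fun r : ZMod q => h ^ r.val * c) r))))]
  rw [if_pos hr.symm, PMF.uniformOfFintype_apply]
  have : Fintype.card G = q := by rw [← Nat.card_eq_fintype_card, hcard]
  simp [this, ZMod.card]

/-- Perfect hiding of the Pedersen vector commitment: if `h` generates the
finite commutative group `G` of cardinality `q`, then for any two vote vectors
`v₀, v₁`, the distribution of the commitment under uniformly random randomness
`r ∈ ZMod q` is the same, and both distributions are uniform on `G`. -/
theorem commVec_perfectly_hiding {G : Type*} [CommGroup G] [Fintype G]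
    (q : ℕ) [NeZero q] (hcard : Nat.card G = q)
    (h : G) (hord : orderOf h = q) (hgen : Subgroup.zpowers h = ⊤)
    {n : ℕ} (g : Fin n → G) (v₀ v₁ : Fin n → ℤ) :
    (PMF.uniformOfFintype (ZMod q)).map (fun r => CommVecZ h g v₀ r) =
        (PMF.uniformOfFintype (ZMod q)).map (fun r => CommVecZ h g v₁ r) ∧
      (PMF.uniformOfFintype (ZMod q)).map (fun r => CommVecZ h g v₀ r) =
        PMF.uniformOfFintype G := by
  have H0 := commVec_aux_map q hcard h hord hgen (∏ k, g k ^ v₀ k)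
  have H1 := commVec_aux_map q hcard h hord hgen (∏ k, g k ^ v₁ k)
  exact ⟨H0.trans H1.symm, H0⟩
end

section
/- Let G be a commutative group, h ∈ G, g : Fin n → G, with CommVec(v; r) = h^r · ∏_k g_k^{v(k)}, ReRand(c; r') = c · h^{r'}, and DeRand(c'; r') = c' · h^{-r'} (v : Fin n → ℤ, r, r' ∈ ℤ). Let I (voters) and J (talliers) be finite index sets, and for each i ∈ I, j ∈ J let v_{i,j} : Fin n → ℤ, r_{i,j} ∈ ℤ, r̃_{i,j} ∈ ℤ, with published commitments c̃_{i,j} = ReRand(CommVec(v_{i,j}; r_{i,j}); r̃_{i,j}). Then DeRand(∏_{j ∈ J} ∏_{i ∈ I} c̃_{i,j}; ∑_{j ∈ J} ∑_{i ∈ I} r̃_{i,j}) = CommVec(𝕋; R), where 𝕋 = ∑_{j ∈ J} ∑_{i ∈ I} v_{i,j} is the final tally and R = ∑_{j ∈ J} ∑_{i ∈ I} r_{i,j} is the aggregated voter randomness. In particular, if additionally ∑_{j ∈ J} v_{i,j} = v_i for each voter i, the globally derandomized commitment c_⊥ is a commitment to 𝕋 = ∑_{i ∈ I} v_i under randomness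 R. -/
private lemma zpow_sum' {G : Type*} [CommGroup G] (a : G) {ι : Type*} (s : Finset ι)
    (f : ι → ℤ) : a ^ (∑ i ∈ s, f i) = ∏ i ∈ s, a ^ f i := by
  induction s using Finset.cons_induction with
  | empty => simp
  | cons i s hi ih => simp [Finset.sum_cons, Finset.prod_cons, zpow_add, ih]

/-- Pedersen vector commitment: `CommVec(v; r) = h^r · ∏ k, g k ^ v k`. -/
def CommVec {G : Type*} [CommGroup G] {n : ℕ} (h : G) (g : Fin n → G)
    (v : Fin n → ℤ) (r : ℤ) : G :=
  h ^ r * ∏ k, g k ^ v k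

/-- Re-randomization: `ReRand(c; r') = c · h^{r'}`. -/
def ReRand {G : Type*} [CommGroup G] (h : G) (c : G) (r' : ℤ) : G :=
  c * h ^ r'

/-- De-randomization: `DeRand(c'; r') = c' · h^{-r'}`. -/
def DeRand {G : Type*} [CommGroup G] (h : G) (c' : G) (r' : ℤ) : G :=
  c' * h ^ (-r')

/-- Algebraic core of Tally-as-Intended and End-to-End Verifiability: given the
published re-randomized commitments `c̃ᵢⱼ = ReRand(CommVec(vᵢⱼ; rᵢⱼ); r̃ᵢⱼ)`,
de-randomizing their global product by the sum of all blinding factors yields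
the commitment to the final tally `𝕋 = ∑ⱼ ∑ᵢ vᵢⱼ` under the aggregated voter
randomness `R = ∑ⱼ ∑ᵢ rᵢⱼ`.  In particular, if for each voter `i` the shares
reconstruct the vote (`∑ⱼ vᵢⱼ = voteᵢ`), then the tally equals `∑ᵢ voteᵢ`, so
`c_⊥` is a commitment to the sum of all votes. -/
theorem global_derandomization {G : Type*} [CommGroup G] {n : ℕ}
    (h : G) (g : Fin n → G) {I J : Type*} [Fintype I] [Fintype J]
    (v : I → J → Fin n → ℤ) (r : I → J → ℤ) (rt : I → J → ℤ)
    (ct : I → J → G)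
    (hct : ∀ i j, ct i j = ReRand h (CommVec h g (v i j) (r i j)) (rt i j)) :
    DeRand h (∏ j, ∏ i, ct i j) (∑ j, ∑ i, rt i j) =
        CommVec h g (∑ j, ∑ i, v i j) (∑ j, ∑ i, r i j) ∧
      ∀ vote : I → Fin n → ℤ, (∀ i, ∑ j, v i j = vote i) →
        ∑ j, ∑ i, v i j = ∑ i, vote i := by
  constructor
  · have hg : ∏ j, ∏ i, ∏ k, g k ^ v i j k = ∏ k, g k ^ ∑ j, ∑ i, v i j k := by
      simp only [zpow_sum']
      calc ∏ j, ∏ i, ∏ k, g k ^ v i j k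
          = ∏ j, ∏ k, ∏ i, g k ^ v i j k :=
            Finset.prod_congr rfl fun j _ => Finset.prod_comm
        _ = ∏ k, ∏ j, ∏ i, g k ^ v i j k := Finset.prod_comm
    simp only [hct, ReRand, DeRand, CommVec, Finset.prod_mul_distrib, ← zpow_sum',
      Finset.sum_apply]
    rw [hg, zpow_neg, mul_inv_cancel_right]
  · intro vote hv
    rw [Finset.sum_comm]
    exact Finset.sum_congr rfl fun i _ => hv i
end
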